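/- Let N ≥ 1, let L = GC3, and let B be a ZMod 2-submodule of (Fin N → ZMod 2 × ZMod 2). Let b, b̂ ∈ B with b ≠ b̂ and w_c(x_b, x_b̂) ≠ 0, where x_b = L⁻¹ ∘ b. Then the codewords b' = 0 and b̂' = b + b̂ also lie in B, satisfy w_c(x_{b'}, x_{b̂'}) = 0 and β(x_{b'}, x_{b̂'}) = β(x_b, x_b̂), and both a^X(x_{b'}, x_{b̂'}) < a^X(x_b, x_b̂) and a^B(x_{b'}, x_{b̂'}) < a^B(x_b, x_b̂) hold. -/

import Mathlib

open Finset

noncomputable section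

/-- Pairwise weight of a pair of 4-PAM symbols: `1` if `|i−j| ∈ {1,3}`,
`4` if `|i−j| = 2`, `0` if `i = j`. -/
def pw (i j : Fin 4) : ℝ :=
  if i = j then 0 else if ((i : ℤ) - (j : ℤ)).natAbs = 2 then 4 else 1

/-- Corner count: number of positions where the symbol pair is `(s₁,s₄)` or `(s₄,s₁)`. -/
def wc {N : ℕ} (x xh : Fin N → Fin 4) : ℕ :=
  (Finset.univ.filter fun k =>
    (x k, xh k) = ((0 : Fin 4), (3 : Fin 4)) ∨ (x k, xh k) = ((3 : Fin 4), (0 : Fin 4))).card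

/-- Weighted error count `β(x, x̂)`. -/
def betaW {N : ℕ} (x xh : Fin N → Fin 4) : ℝ := ∑ k, pw (x k) (xh k)

/-- Normalized distance of the symbol-wise decoder: `a^X = √(β + 8 w_c)`. -/
def aX {N : ℕ} (x xh : Fin N → Fin 4) : ℝ :=
  Real.sqrt (betaW x xh + 8 * wc x xh)

/-- Normalized distance of the bit-wise decoder: `a^B = (β + 2 w_c)/√β`. -/
def aB {N : ℕ} (x xh : Fin N → Fin 4) : ℝ :=
  (betaW x xh + 2 * wc x xh) / Real.sqrt (betaW x xh)

/-- The Gray labeling GC1 (binary reflected Gray code) for 4-PAM. -/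
def GC1 : Fin 4 ≃ (ZMod 2 × ZMod 2) where
  toFun := ![(0, 0), (0, 1), (1, 1), (1, 0)]
  invFun := fun p => if p = (0, 0) then 0 else if p = (0, 1) then 1
    else if p = (1, 1) then 2 else 3
  left_inv := by decide
  right_inv := by decide

/-- The Gray labeling GC2 for 4-PAM. -/
def GC2 : Fin 4 ≃ (ZMod 2 × ZMod 2) where
  toFun := ![(0, 0), (1, 0), (1, 1), (0, 1)]
  invFun := fun p => if p = (0, 0) then 0 else if p = (1, 0) then 1
    else if p = (1, 1) then 2 else 3
  left_inv := by decide
  right_inv := by decide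

/-- The Gray labeling GC3 for 4-PAM. -/
def GC3 : Fin 4 ≃ (ZMod 2 × ZMod 2) where
  toFun := ![(0, 1), (0, 0), (1, 0), (1, 1)]
  invFun := fun p => if p = (0, 1) then 0 else if p = (0, 0) then 1
    else if p = (1, 0) then 2 else 3
  left_inv := by decide
  right_inv := by decide

/-- The Gray labeling GC4 for 4-PAM. -/
def GC4 : Fin 4 ≃ (ZMod 2 × ZMod 2) where
  toFun := ![(1, 0), (0, 0), (0, 1), (1, 1)]
  invFun := fun p => if p = (1, 0) then 0 else if p = (0, 0) then 1
    else if p = (0, 1) then 2 else 3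
  left_inv := by decide
  right_inv := by decide

/-- Symbol sequence corresponding to a binary codeword under labeling `L`. -/
def xb {N : ℕ} (L : Fin 4 ≃ (ZMod 2 × ZMod 2)) (b : Fin N → ZMod 2 × ZMod 2) :
    Fin N → Fin 4 := fun k => L.symm (b k)

end

/-!
Under GC3 the pairwise weight `pw (GC3.symm p) (GC3.symm q)` depends only on `p + q`, so
replacing the pair `(b, b̂)` by `(0, b + b̂)` keeps every summand of `β`. The all-zero label
is the inner symbol `1`, so the new pair has no corners, while every corner of the old pair
contributes `1` to `β`, forcing `β > 0`. Both `a^X` and `a^B` are strictly increasing in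
`w_c` at fixed `β > 0`.
-/

lemma pw_nonneg (i j : Fin 4) : 0 ≤ pw i j := by
  unfold pw; split_ifs <;> norm_num

lemma pw_of_corner {i j : Fin 4} (h : (i, j) = (0, 3) ∨ (i, j) = (3, 0)) : pw i j = 1 := by
  rcases h with h | h <;> obtain ⟨rfl, rfl⟩ := Prod.ext_iff.mp h <;> rfl

lemma wc_le_betaW {N : ℕ} (x xh : Fin N → Fin 4) : (wc x xh : ℝ) ≤ betaW x xh := by
  unfold wc betaW
  rw [card_eq_sum_ones, Nat.cast_sum, Nat.cast_one]
  calc ∑ k ∈ univ.filter _, (1 : ℝ)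
      = ∑ k ∈ univ.filter _, pw (x k) (xh k) :=
        sum_congr rfl fun k hk => (pw_of_corner (mem_filter.mp hk).2).symm
    _ ≤ ∑ k, pw (x k) (xh k) :=
        sum_le_sum_of_subset_of_nonneg (filter_subset _ _) fun _ _ _ => pw_nonneg _ _

lemma aX_lt_aX_of_betaW_eq_of_wc_lt {N : ℕ} {x xh y yh : Fin N → Fin 4}
    (hβ : betaW y yh = betaW x xh) (hwc : wc y yh < wc x xh) : aX y yh < aX x xh := by
  have hβ_nonneg : 0 ≤ betaW x xh := sum_nonneg fun _ _ => pw_nonneg _ _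
  have hwc' : (wc y yh : ℝ) < wc x xh := by exact_mod_cast hwc
  unfold aX
  rw [hβ]
  exact Real.sqrt_lt_sqrt (by positivity) (by linarith)

lemma aB_lt_aB_of_betaW_eq_of_wc_lt {N : ℕ} {x xh y yh : Fin N → Fin 4}
    (hβ : betaW y yh = betaW x xh) (hwc : wc y yh < wc x xh) : aB y yh < aB x xh := by
  have hwc' : (wc y yh : ℝ) < wc x xh := by exact_mod_cast hwc
  have hβ_pos : 0 < betaW x xh := by
    linarith [wc_le_betaW x xh, (Nat.cast_nonneg (wc y yh) : (0 : ℝ) ≤ _)]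
  unfold aB
  rw [hβ, div_lt_div_iff_of_pos_right (Real.sqrt_pos.mpr hβ_pos)]
  linarith

lemma wc_const_one {N : ℕ} (xh : Fin N → Fin 4) : wc (fun _ => 1) xh = 0 := by
  simp [wc]

lemma pw_GC3_symm (p q : ZMod 2 × ZMod 2) :
    pw (GC3.symm p) (GC3.symm q) = pw 1 (GC3.symm (p + q)) := by
  fin_cases p <;> fin_cases q <;> rfl

lemma betaW_xb_GC3_zero_add {N : ℕ} (b bh : Fin N → ZMod 2 × ZMod 2) :
    betaW (xb GC3 0) (xb GC3 (b + bh)) = betaW (xb GC3 b) (xb GC3 bh) :=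
  sum_congr rfl fun k _ => (pw_GC3_symm (b k) (bh k)).symm

theorem shift_reduces_distance_GC3_general (N : ℕ)
    (B : Submodule (ZMod 2) (Fin N → ZMod 2 × ZMod 2))
    (b bh : Fin N → ZMod 2 × ZMod 2) (hb : b ∈ B) (hbh : bh ∈ B)
    (hwc : wc (xb GC3 b) (xb GC3 bh) ≠ 0) :
    (0 : Fin N → ZMod 2 × ZMod 2) ∈ B
    ∧ b + bh ∈ B
    ∧ wc (xb GC3 (0 : Fin N → ZMod 2 × ZMod 2)) (xb GC3 (b + bh)) = 0
    ∧ betaW (xb GC3 (0 : Fin N → ZMod 2 × ZMod 2)) (xb GC3 (b + bh))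
        = betaW (xb GC3 b) (xb GC3 bh)
    ∧ aX (xb GC3 (0 : Fin N → ZMod 2 × ZMod 2)) (xb GC3 (b + bh))
        < aX (xb GC3 b) (xb GC3 bh)
    ∧ aB (xb GC3 (0 : Fin N → ZMod 2 × ZMod 2)) (xb GC3 (b + bh))
        < aB (xb GC3 b) (xb GC3 bh) := by
  have hwc₀ : wc (xb GC3 0) (xb GC3 (b + bh)) = 0 := wc_const_one _
  have hβ := betaW_xb_GC3_zero_add b bh
  have hlt : wc (xb GC3 0) (xb GC3 (b + bh)) < wc (xb GC3 b) (xb GC3 bh) := by omega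
  exact ⟨B.zero_mem, B.add_mem hb hbh, hwc₀, hβ,
    aX_lt_aX_of_betaW_eq_of_wc_lt hβ hlt, aB_lt_aB_of_betaW_eq_of_wc_lt hβ hlt⟩

/-- Key step in the proof of Theorem 2 (GC3 case): if `b ≠ b̂`
are codewords of a linear code with `w_c(x_b, x_b̂) ≠ 0`, then `b' = 0` and
`b̂' = b + b̂` are also codewords, with zero corner count, the same `β`, and
strictly smaller normalized distances for both decoders. -/
theorem shift_reduces_distance_GC3 (N : ℕ) (hN : 1 ≤ N)
    (B : Submodule (ZMod 2) (Fin N → ZMod 2 × ZMod 2))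
    (b bh : Fin N → ZMod 2 × ZMod 2) (hb : b ∈ B) (hbh : bh ∈ B)
    (hne : b ≠ bh) (hwc : wc (xb GC3 b) (xb GC3 bh) ≠ 0) :
    (0 : Fin N → ZMod 2 × ZMod 2) ∈ B
    ∧ b + bh ∈ B
    ∧ wc (xb GC3 (0 : Fin N → ZMod 2 × ZMod 2)) (xb GC3 (b + bh)) = 0
    ∧ betaW (xb GC3 (0 : Fin N → ZMod 2 × ZMod 2)) (xb GC3 (b + bh))
        = betaW (xb GC3 b) (xb GC3 bh)
    ∧ aX (xb GC3 (0 : Fin N → ZMod 2 × ZMod 2)) (xb GC3 (b + bh))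
        < aX (xb GC3 b) (xb GC3 bh)
    ∧ aB (xb GC3 (0 : Fin N → ZMod 2 × ZMod 2)) (xb GC3 (b + bh))
        < aB (xb GC3 b) (xb GC3 bh) :=
  shift_reduces_distance_GC3_general N B b bh hb hbh hwc
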